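/- Let γ, α_1, …, α_r, β_1, …, β_t be Hermitian m×m matrices, let A^{(1)}, …, A^{(t)} be Hermitian n×n matrices, and on a probability space let X^{(1)}, …, X^{(r)} be measurable random n×n Hermitian matrices. Set S = γ⊗I_n + Σ_{v=1}^r α_v⊗(X^{(v)}/√n) + Σ_{u=1}^t β_u⊗A^{(u)}. For λ ∈ M_m(ℂ) with Im(λ) positive definite, let H(λ) = (id_m⊗tr_n)( (λ⊗I_n − S)^{-1} ) and G(λ) = E[H(λ)] ∈ M_m(ℂ) (the expectation is well defined since ‖H(λ)‖ ≤ ‖(Im λ)^{-1}‖ almost surely). Then the matrix (λ − γ − Σ_{v=1}^r α_v·G(λ)·α_v)⊗I_n − Σ_{u=1}^t β_u⊗A^{(u)} is invertible, and its inverse Y(λ) satisfies ‖Y(λ)‖ ≤ ‖(Im λ)^{-1}‖. -/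

import Mathlib

/-!
Say that `Im T ≥ c` when `Im ⟪x, T x⟫ ≥ c ‖x‖²` for all `x`. If `Im T ≥ c > 0`, then Cauchy–Schwarz
gives `‖T x‖ ≥ c ‖x‖`, so `T` is invertible with `‖T⁻¹‖ ≤ c⁻¹`; moreover `⟪T z, T⁻¹ (T z)⟫` is the
conjugate of `⟪z, T z⟫`, so `Im T⁻¹ ≤ 0`.

With `c = ‖(Im λ)⁻¹‖⁻¹` we have `Im λ ≥ c`. Since `S` is Hermitian, `Im (λ ⊗ Iₙ - S) ≥ c`, hence the
resolvent has `Im ≤ 0`. This sign survives the partial trace (an average of compressions to the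
diagonal blocks) and the expectation, so `Im G ≤ 0` and `Im (α G α) ≤ 0`. Therefore the imaginary
part of `(λ - γ - Σ α G α) ⊗ Iₙ - Σ β ⊗ A` is at least `Im λ ⊗ Iₙ ≥ c`.
-/

open MeasureTheory
open scoped Kronecker ComplexOrder

/-- The operator (spectral) norm of a square complex matrix. -/
noncomputable def opNorm {ι : Type*} [Fintype ι] [DecidableEq ι] (M : Matrix ι ι ℂ) : ℝ :=
  ‖Matrix.toEuclideanCLM (𝕜 := ℂ) M‖

/-- The `(k,l)` block (an `m × m` matrix) of a matrix `M ∈ M_m(ℂ) ⊗ M_n(ℂ)`. -/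
def blk {m n : ℕ} (M : Matrix (Fin m × Fin n) (Fin m × Fin n) ℂ) (k l : Fin n) :
    Matrix (Fin m) (Fin m) ℂ :=
  Matrix.of fun a b => M (a, k) (b, l)

/-- The imaginary part `(T - T*) / (2i)` of a square complex matrix. -/
noncomputable def imPart {ι : Type*} (T : Matrix ι ι ℂ) : Matrix ι ι ℂ :=
  (2 * Complex.I)⁻¹ • (T - T.conjTranspose)

/-- The normalized partial trace `(id_m ⊗ tr_n)(M) = (1/n) Σ_k M_{kk}`. -/
noncomputable def partialTrace {m n : ℕ} (M : Matrix (Fin m × Fin n) (Fin m × Fin n) ℂ) :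
    Matrix (Fin m) (Fin m) ℂ :=
  ((n : ℂ))⁻¹ • ∑ k : Fin n, blk M k k

open WithLp

namespace Matrix

section ImaginaryPart

variable {ι : Type*} [Fintype ι]

def ImNonpos (T : Matrix ι ι ℂ) : Prop :=
  ∀ x : ι → ℂ, (star x ⬝ᵥ T *ᵥ x).im ≤ 0

/-- `Im T ≥ C⁻¹`, stated multiplicatively so that `C = 0` (possible only on the zero space) needs
no special treatment. -/
def ImCoercive (C : ℝ) (T : Matrix ι ι ℂ) : Prop :=
  ∀ x : ι → ℂ, ‖toLp 2 x‖ ^ 2 ≤ C * (star x ⬝ᵥ T *ᵥ x).im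

lemma star_dotProduct_conjTranspose_mulVec (T : Matrix ι ι ℂ) (x : ι → ℂ) :
    star x ⬝ᵥ Tᴴ *ᵥ x = star (star x ⬝ᵥ T *ᵥ x) := by
  rw [← star_dotProduct_star, star_star, star_mulVec, ← dotProduct_mulVec]

lemma star_dotProduct_imPart_mulVec (T : Matrix ι ι ℂ) (x : ι → ℂ) :
    star x ⬝ᵥ imPart T *ᵥ x = (star x ⬝ᵥ T *ᵥ x).im := by
  rw [imPart, smul_mulVec, dotProduct_smul, sub_mulVec, dotProduct_sub,
    star_dotProduct_conjTranspose_mulVec, smul_eq_mul, Complex.star_def, Complex.sub_conj]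
  field_simp
  push_cast
  ring

lemma norm_star_dotProduct_le (x y : ι → ℂ) : ‖star x ⬝ᵥ y‖ ≤ ‖toLp 2 x‖ * ‖toLp 2 y‖ := by
  simpa [EuclideanSpace.inner_eq_star_dotProduct, dotProduct_comm] using
    norm_inner_le_norm (𝕜 := ℂ) (toLp 2 x) (toLp 2 y)

lemma IsHermitian.imNonpos {T : Matrix ι ι ℂ} (hT : T.IsHermitian) : ImNonpos T :=
  fun x => (hT.im_star_dotProduct_mulVec_self x).le

lemma ImNonpos.add {T K : Matrix ι ι ℂ} (hT : ImNonpos T) (hK : ImNonpos K) :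
    ImNonpos (T + K) := fun x => by
  simpa only [add_mulVec, dotProduct_add, Complex.add_im] using add_nonpos (hT x) (hK x)

lemma imNonpos_sum {κ : Type*} (s : Finset κ) {T : κ → Matrix ι ι ℂ}
    (hT : ∀ v ∈ s, ImNonpos (T v)) : ImNonpos (∑ v ∈ s, T v) := by
  classical
  induction s using Finset.induction_on with
  | empty => exact fun x => by simp
  | insert v s hv ih =>
    rw [Finset.sum_insert hv]
    simp only [Finset.mem_insert, forall_eq_or_imp] at hT
    exact hT.1.add (ih hT.2)

lemma ImNonpos.real_smul {T : Matrix ι ι ℂ} (hT : ImNonpos T) {c : ℝ} (hc : 0 ≤ c) :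
    ImNonpos ((c : ℂ) • T) := fun x => by
  simpa [smul_mulVec, dotProduct_smul] using mul_nonpos_of_nonneg_of_nonpos hc (hT x)

lemma ImNonpos.conjTranspose_mul_mul {G : Matrix ι ι ℂ} (hG : ImNonpos G) (B : Matrix ι ι ℂ) :
    ImNonpos (Bᴴ * G * B) := fun x => by
  simpa only [← mulVec_mulVec, dotProduct_mulVec _ _ (G *ᵥ _), ← star_mulVec] using hG (B *ᵥ x)

lemma ImCoercive.sub {C : ℝ} {T K : Matrix ι ι ℂ} (hT : ImCoercive C T) (hC : 0 ≤ C)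
    (hK : ImNonpos K) : ImCoercive C (T - K) := fun x => by
  rw [sub_mulVec, dotProduct_sub, Complex.sub_im]
  nlinarith [hT x, hK x]

lemma ImCoercive.im_nonneg {C : ℝ} {T : Matrix ι ι ℂ} (hT : ImCoercive C T) (hC : 0 ≤ C)
    (x : ι → ℂ) : 0 ≤ (star x ⬝ᵥ T *ᵥ x).im := by
  rcases hC.eq_or_lt with rfl | hC
  · have hx : x = 0 := by simpa using hT x
    simp [hx]
  · exact nonneg_of_mul_nonneg_right ((sq_nonneg _).trans (hT x)) hC

lemma ImCoercive.norm_le_mul_norm_mulVec {C : ℝ} {T : Matrix ι ι ℂ} (hT : ImCoercive C T)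
    (hC : 0 ≤ C) (x : ι → ℂ) : ‖toLp 2 x‖ ≤ C * ‖toLp 2 (T *ᵥ x)‖ := by
  have h : ‖toLp 2 x‖ ^ 2 ≤ ‖toLp 2 x‖ * (C * ‖toLp 2 (T *ᵥ x)‖) :=
    calc ‖toLp 2 x‖ ^ 2 ≤ C * (star x ⬝ᵥ T *ᵥ x).im := hT x
      _ ≤ C * ‖star x ⬝ᵥ T *ᵥ x‖ := by gcongr; exact Complex.im_le_norm _
      _ ≤ C * (‖toLp 2 x‖ * ‖toLp 2 (T *ᵥ x)‖) := by gcongr; exact norm_star_dotProduct_le _ _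
      _ = _ := by ring
  rcases (norm_nonneg (toLp 2 x)).eq_or_lt with h0 | h0
  · rw [← h0]; positivity
  · nlinarith

section Kronecker

variable {κ : Type*} [Fintype κ] [DecidableEq κ]

lemma star_dotProduct_kronecker_one_mulVec (L : Matrix ι ι ℂ) (x : ι × κ → ℂ) :
    star x ⬝ᵥ (L ⊗ₖ (1 : Matrix κ κ ℂ)) *ᵥ x
      = ∑ k, star (fun a => x (a, k)) ⬝ᵥ L *ᵥ fun a => x (a, k) := by
  simp [dotProduct, mulVec, Fintype.sum_prod_type_right, one_apply, Finset.mul_sum]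

omit [DecidableEq κ] in
lemma sq_norm_toLp_prod (x : ι × κ → ℂ) :
    ‖toLp 2 x‖ ^ 2 = ∑ k, ‖toLp 2 fun a => x (a, k)‖ ^ 2 := by
  simp [EuclideanSpace.norm_sq_eq, Fintype.sum_prod_type_right]

lemma ImCoercive.kronecker_one {C : ℝ} {L : Matrix ι ι ℂ} (hL : ImCoercive C L) :
    ImCoercive C (L ⊗ₖ (1 : Matrix κ κ ℂ)) := fun x => by
  rw [sq_norm_toLp_prod, star_dotProduct_kronecker_one_mulVec, Complex.im_sum, Finset.mul_sum]
  exact Finset.sum_le_sum fun k _ => hL _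

end Kronecker

lemma ImNonpos.integral {Ω : Type*} [MeasurableSpace Ω] {μ : Measure Ω} {H : Ω → Matrix ι ι ℂ}
    (hint : ∀ i j, Integrable (fun ω => H ω i j) μ) (hH : ∀ᵐ ω ∂μ, ImNonpos (H ω)) :
    ImNonpos (of fun i j => ∫ ω, H ω i j ∂μ) := fun x => by
  have hint_entry : ∀ i, Integrable (fun ω => star x i * ∑ j, H ω i j * x j) μ := fun i =>
    (integrable_finsetSum _ fun j _ => (hint i j).mul_const _).const_mul _
  have hint_quad : Integrable (fun ω => star x ⬝ᵥ H ω *ᵥ x) μ :=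
    integrable_finsetSum _ fun i _ => hint_entry i
  have hquad : star x ⬝ᵥ (of fun i j => ∫ ω, H ω i j ∂μ) *ᵥ x
      = ∫ ω, star x ⬝ᵥ H ω *ᵥ x ∂μ := by
    simp only [dotProduct, mulVec, of_apply]
    rw [integral_finsetSum _ fun i _ => hint_entry i]
    refine Finset.sum_congr rfl fun i _ => ?_
    rw [integral_const_mul, integral_finsetSum _ fun j _ => (hint i j).mul_const _]
    simp_rw [integral_mul_const]
  rw [hquad, ← RCLike.im_to_complex, ← integral_im hint_quad]
  exact integral_nonpos_of_ae (hH.mono fun ω hω => hω x)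

variable [DecidableEq ι]

lemma ImCoercive.isUnit {C : ℝ} {T : Matrix ι ι ℂ} (hT : ImCoercive C T) (hC : 0 ≤ C) :
    IsUnit T := by
  refine mulVec_injective_iff_isUnit.mp fun x y hxy => ?_
  have h := hT.norm_le_mul_norm_mulVec hC (x - y)
  rw [mulVec_sub, hxy, sub_self] at h
  simpa [sub_eq_zero] using h

lemma ImCoercive.opNorm_inv_le {C : ℝ} {T : Matrix ι ι ℂ} (hT : ImCoercive C T) (hC : 0 ≤ C) :
    opNorm T⁻¹ ≤ C := by
  refine ContinuousLinearMap.opNorm_le_bound _ hC fun y => ?_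
  have h := hT.norm_le_mul_norm_mulVec hC (T⁻¹ *ᵥ ofLp y)
  rwa [mulVec_mulVec, mul_nonsing_inv _ ((isUnit_iff_isUnit_det T).mp (hT.isUnit hC)),
    one_mulVec, toLp_ofLp] at h

lemma ImCoercive.imNonpos_inv {C : ℝ} {T : Matrix ι ι ℂ} (hT : ImCoercive C T) (hC : 0 ≤ C) :
    ImNonpos T⁻¹ := fun y => by
  have hdet := (isUnit_iff_isUnit_det T).mp (hT.isUnit hC)
  obtain ⟨z, rfl⟩ : ∃ z, T *ᵥ z = y :=
    ⟨T⁻¹ *ᵥ y, by rw [mulVec_mulVec, mul_nonsing_inv _ hdet, one_mulVec]⟩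
  rw [mulVec_mulVec, nonsing_inv_mul _ hdet, one_mulVec, star_mulVec, ← dotProduct_mulVec,
    star_dotProduct_conjTranspose_mulVec, Complex.star_def, Complex.conj_im, neg_nonpos]
  exact hT.im_nonneg hC z

open scoped Matrix.Norms.L2Operator MatrixOrder in
lemma PosDef.sq_norm_le_opNorm_inv_mul_re {P : Matrix ι ι ℂ} (hP : P.PosDef) (x : ι → ℂ) :
    ‖toLp 2 x‖ ^ 2 ≤ opNorm P⁻¹ * (star x ⬝ᵥ P *ᵥ x).re := by
  obtain ⟨B, hB, rfl⟩ :=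
    CStarAlgebra.isStrictlyPositive_iff_eq_star_mul_self.mp hP.isStrictlyPositive
  have hquad : (star x ⬝ᵥ (star B * B) *ᵥ x).re = ‖toLp 2 (B *ᵥ x)‖ ^ 2 := by
    rw [← mulVec_mulVec, dotProduct_mulVec, star_eq_conjTranspose, vecMul_conjTranspose,
      EuclideanSpace.norm_sq_eq, ← Complex.ofReal_re (∑ _, _), Complex.ofReal_sum]
    simp [dotProduct, Complex.mul_conj, Complex.normSq_eq_norm_sq, mul_comm]
  have hnorm : opNorm (star B * B)⁻¹ = ‖B⁻¹‖ ^ 2 := by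
    rw [opNorm, ← cstar_norm_def, star_eq_conjTranspose, mul_inv_rev, ← conjTranspose_nonsing_inv,
      ← l2_opNorm_conjTranspose B⁻¹, sq, ← l2_opNorm_conjTranspose_mul_self,
      conjTranspose_conjTranspose]
  have hx : ‖toLp 2 x‖ ≤ ‖B⁻¹‖ * ‖toLp 2 (B *ᵥ x)‖ := by
    simpa [mulVec_mulVec, nonsing_inv_mul _ ((isUnit_iff_isUnit_det B).mp hB)] using
      l2_opNorm_mulVec B⁻¹ (toLp 2 (B *ᵥ x))
  rw [hquad, hnorm, ← mul_pow]
  exact pow_le_pow_left₀ (norm_nonneg _) hx 2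

lemma imCoercive_of_posDef_imPart {T : Matrix ι ι ℂ} (hT : (imPart T).PosDef) :
    ImCoercive (opNorm (imPart T)⁻¹) T := fun x => by
  simpa [star_dotProduct_imPart_mulVec] using hT.sq_norm_le_opNorm_inv_mul_re x

lemma norm_apply_le_opNorm (M : Matrix ι ι ℂ) (i j : ι) : ‖M i j‖ ≤ opNorm M := by
  have hentry : M i j = star (Pi.single i 1) ⬝ᵥ M *ᵥ Pi.single j 1 := by simp
  have hcol := (toEuclideanCLM (𝕜 := ℂ) M).le_opNorm (toLp 2 (Pi.single j 1))
  rw [toEuclideanCLM_toLp, PiLp.toLp_single, PiLp.norm_single, norm_one, mul_one] at hcol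
  calc ‖M i j‖ ≤ ‖toLp 2 (Pi.single i 1 : ι → ℂ)‖ * ‖toLp 2 (M *ᵥ Pi.single j 1)‖ :=
        hentry ▸ norm_star_dotProduct_le _ _
    _ ≤ opNorm M := by simpa [PiLp.toLp_single, PiLp.norm_single, opNorm] using hcol

end ImaginaryPart

lemma IsHermitian.kronecker {ι κ R : Type*} [CommMagma R] [StarMul R] {P : Matrix ι ι R}
    {B : Matrix κ κ R} (hP : P.IsHermitian) (hB : B.IsHermitian) : (P ⊗ₖ B).IsHermitian := by
  rw [IsHermitian, conjTranspose_kronecker, hP.eq, hB.eq]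

section Measurability

variable {Ω ι R : Type*} [MeasurableSpace Ω] [Fintype ι] [DecidableEq ι] [MeasurableSpace R]

lemma measurable_det [CommRing R] [MeasurableAdd₂ R] [MeasurableMul₂ R] {f : Ω → Matrix ι ι R}
    (hf : ∀ i j, Measurable fun ω => f ω i j) : Measurable fun ω => (f ω).det := by
  simp only [det_apply']
  exact Finset.measurable_sum _ fun σ _ => (Finset.measurable_prod _ fun i _ => hf _ _).const_mul _

lemma measurable_inv_apply [Field R] [MeasurableAdd₂ R] [MeasurableMul₂ R] [MeasurableInv R]
    {f : Ω → Matrix ι ι R} (hf : ∀ i j, Measurable fun ω => f ω i j) (i j : ι) :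
    Measurable fun ω => (f ω)⁻¹ i j := by
  simp only [inv_def, smul_apply, smul_eq_mul, Ring.inverse_eq_inv', adjugate_apply]
  refine (measurable_det hf).inv.mul (measurable_det fun a b => ?_)
  by_cases h : a = j <;> simp [updateRow_apply, h, hf a b]

end Measurability

end Matrix

open Matrix

section PartialTrace

variable {m n : ℕ}

lemma partialTrace_apply (M : Matrix (Fin m × Fin n) (Fin m × Fin n) ℂ) (i j : Fin m) :
    partialTrace M i j = (n : ℂ)⁻¹ * ∑ k, M (i, k) (j, k) := by
  simp [partialTrace, blk, Matrix.sum_apply]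

lemma imNonpos_blk {M : Matrix (Fin m × Fin n) (Fin m × Fin n) ℂ} (hM : ImNonpos M)
    (k : Fin n) : ImNonpos (blk M k k) := fun y => by
  have hcompress : star y ⬝ᵥ blk M k k *ᵥ y
      = star (fun p : Fin m × Fin n => if p.2 = k then y p.1 else 0) ⬝ᵥ
          M *ᵥ fun p => if p.2 = k then y p.1 else 0 := by
    simp [dotProduct, mulVec, blk, Fintype.sum_prod_type_right, apply_ite (star : ℂ → ℂ),
      Finset.mul_sum]
  exact hcompress ▸ hM _

lemma imNonpos_partialTrace {M : Matrix (Fin m × Fin n) (Fin m × Fin n) ℂ}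
    (hM : ImNonpos M) : ImNonpos (partialTrace M) := by
  have hreal : partialTrace M = (((n : ℝ)⁻¹ : ℝ) : ℂ) • ∑ k, blk M k k := by
    simp [partialTrace]
  rw [hreal]
  exact (imNonpos_sum _ fun k _ => imNonpos_blk hM k).real_smul (by positivity)

lemma norm_partialTrace_apply_le (M : Matrix (Fin m × Fin n) (Fin m × Fin n) ℂ) (i j : Fin m) :
    ‖partialTrace M i j‖ ≤ opNorm M := by
  rw [partialTrace_apply, norm_mul, norm_inv, Complex.norm_natCast]
  have hsum : ‖∑ k, M (i, k) (j, k)‖ ≤ n * opNorm M :=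
    calc ‖∑ k, M (i, k) (j, k)‖ ≤ ∑ k, ‖M (i, k) (j, k)‖ := norm_sum_le _ _
      _ ≤ ∑ _k : Fin n, opNorm M := Finset.sum_le_sum fun k _ => norm_apply_le_opNorm M _ _
      _ = n * opNorm M := by simp
  calc (n : ℝ)⁻¹ * ‖∑ k, M (i, k) (j, k)‖ ≤ (n : ℝ)⁻¹ * (n * opNorm M) := by gcongr
    _ ≤ opNorm M := by
        rw [← mul_assoc]
        exact mul_le_of_le_one_left (norm_nonneg _) (inv_mul_le_one_of_le₀ le_rfl (by positivity))

lemma measurable_partialTrace_apply {Ω : Type*} [MeasurableSpace Ω]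
    {f : Ω → Matrix (Fin m × Fin n) (Fin m × Fin n) ℂ} (hf : ∀ p q, Measurable fun ω => f ω p q)
    (i j : Fin m) : Measurable fun ω => partialTrace (f ω) i j := by
  simp only [partialTrace_apply]
  exact (Finset.measurable_sum _ fun k _ => hf _ _).const_mul _

lemma imNonpos_integral_partialTrace_inv {Ω : Type*} [MeasurableSpace Ω] {μ : Measure Ω}
    [IsFiniteMeasure μ] {C : ℝ} (hC : 0 ≤ C) {R : Ω → Matrix (Fin m × Fin n) (Fin m × Fin n) ℂ}
    (hmeas : ∀ p q, Measurable fun ω => R ω p q) (hR : ∀ ω, ImCoercive C (R ω)) :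
    ImNonpos (of fun i j => ∫ ω, partialTrace (R ω)⁻¹ i j ∂μ) := by
  refine ImNonpos.integral (fun i j => .of_bound ?_ C (ae_of_all _ fun ω => ?_))
    (ae_of_all _ fun ω => imNonpos_partialTrace ((hR ω).imNonpos_inv hC))
  · exact (measurable_partialTrace_apply (measurable_inv_apply hmeas) i j).aestronglyMeasurable
  · exact (norm_partialTrace_apply_le _ i j).trans ((hR ω).opNorm_inv_le hC)

end PartialTrace

theorem stmt9_general {m n r t : ℕ}
    {Ω : Type*} [MeasurableSpace Ω] (μ : Measure Ω) [IsProbabilityMeasure μ]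
    (γ : Matrix (Fin m) (Fin m) ℂ) (hγ : γ.IsHermitian)
    (α : Fin r → Matrix (Fin m) (Fin m) ℂ) (hα : ∀ v, (α v).IsHermitian)
    (β : Fin t → Matrix (Fin m) (Fin m) ℂ) (hβ : ∀ u, (β u).IsHermitian)
    (A : Fin t → Matrix (Fin n) (Fin n) ℂ) (hA : ∀ u, (A u).IsHermitian)
    (X : Fin r → Ω → Matrix (Fin n) (Fin n) ℂ)
    (hXmeas : ∀ v i j, Measurable fun ω => X v ω i j)
    (hXherm : ∀ v ω, (X v ω).IsHermitian)
    (lam : Matrix (Fin m) (Fin m) ℂ) (hlam : (imPart lam).PosDef)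
    (S : Ω → Matrix (Fin m × Fin n) (Fin m × Fin n) ℂ)
    (hS : ∀ ω, S ω = γ ⊗ₖ (1 : Matrix (Fin n) (Fin n) ℂ)
        + ∑ v, α v ⊗ₖ (((Real.sqrt n : ℂ))⁻¹ • X v ω)
        + ∑ u, β u ⊗ₖ A u)
    (G : Matrix (Fin m) (Fin m) ℂ)
    (hG : G = Matrix.of fun i j =>
        ∫ ω, partialTrace ((lam ⊗ₖ (1 : Matrix (Fin n) (Fin n) ℂ) - S ω)⁻¹) i j ∂μ) :
    IsUnit ((lam - γ - ∑ v, α v * G * α v) ⊗ₖ (1 : Matrix (Fin n) (Fin n) ℂ)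
        - ∑ u, β u ⊗ₖ A u) ∧
    opNorm (((lam - γ - ∑ v, α v * G * α v) ⊗ₖ (1 : Matrix (Fin n) (Fin n) ℂ)
        - ∑ u, β u ⊗ₖ A u)⁻¹) ≤ opNorm ((imPart lam)⁻¹) := by
  set C := opNorm (imPart lam)⁻¹
  have hC : 0 ≤ C := norm_nonneg _
  have hlamC : ImCoercive C lam := imCoercive_of_posDef_imPart hlam
  have hβA : ImNonpos (∑ u, β u ⊗ₖ A u) :=
    imNonpos_sum _ fun u _ => ((hβ u).kronecker (hA u)).imNonpos
  have hSnonpos : ∀ ω, ImNonpos (S ω) := fun ω => by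
    rw [hS ω]
    refine (((hγ.kronecker isHermitian_one).imNonpos).add (imNonpos_sum _ fun v _ => ?_)).add hβA
    exact ((hα v).kronecker ((hXherm v ω).smul (by simp [IsSelfAdjoint]))).imNonpos
  have hres : ∀ ω, ImCoercive C (lam ⊗ₖ (1 : Matrix (Fin n) (Fin n) ℂ) - S ω) := fun ω =>
    hlamC.kronecker_one.sub hC (hSnonpos ω)
  have hresMeas : ∀ p q, Measurable fun ω => (lam ⊗ₖ (1 : Matrix (Fin n) (Fin n) ℂ) - S ω) p q := by
    rintro ⟨a, k⟩ ⟨b, l⟩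
    simp only [hS, Matrix.sub_apply, Matrix.add_apply, Matrix.sum_apply, kroneckerMap_apply,
      Matrix.smul_apply, smul_eq_mul]
    exact ((measurable_const.add (Finset.measurable_sum _ fun v _ =>
      ((hXmeas v k l).const_mul _).const_mul _)).add measurable_const).const_sub _
  have hGnonpos : ImNonpos G := hG ▸ imNonpos_integral_partialTrace_inv hC hresMeas hres
  have hαGα : ∀ v, ImNonpos (α v * G * α v) := fun v => by
    simpa only [(hα v).eq] using hGnonpos.conjTranspose_mul_mul (α v)
  have hY : ImCoercive C ((lam - γ - ∑ v, α v * G * α v) ⊗ₖ (1 : Matrix (Fin n) (Fin n) ℂ)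
      - ∑ u, β u ⊗ₖ A u) :=
    (((hlamC.sub hC hγ.imNonpos).sub hC (imNonpos_sum _ fun v _ => hαGα v)).kronecker_one).sub hC hβA
  exact ⟨hY.isUnit hC, hY.opNorm_inv_le hC⟩

/-- with `S = γ⊗Iₙ + Σ_v α_v⊗(X⁽ᵛ⁾/√n) + Σ_u β_u⊗A⁽ᵘ⁾`,
`H(λ) = (id_m⊗tr_n)((λ⊗Iₙ − S)⁻¹)` and `G(λ) = E[H(λ)]` (entrywise expectation,
i.e. the Bochner integral), the matrix
`(λ − γ − Σ_v α_v G(λ) α_v)⊗Iₙ − Σ_u β_u⊗A⁽ᵘ⁾` is invertible and its inverse `Y(λ)`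
satisfies `‖Y(λ)‖ ≤ ‖(Im λ)⁻¹‖`. -/
theorem stmt9 {m n r t : ℕ} (hn : 0 < n)
    {Ω : Type*} [MeasurableSpace Ω] (μ : Measure Ω) [IsProbabilityMeasure μ]
    (γ : Matrix (Fin m) (Fin m) ℂ) (hγ : γ.IsHermitian)
    (α : Fin r → Matrix (Fin m) (Fin m) ℂ) (hα : ∀ v, (α v).IsHermitian)
    (β : Fin t → Matrix (Fin m) (Fin m) ℂ) (hβ : ∀ u, (β u).IsHermitian)
    (A : Fin t → Matrix (Fin n) (Fin n) ℂ) (hA : ∀ u, (A u).IsHermitian)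
    (X : Fin r → Ω → Matrix (Fin n) (Fin n) ℂ)
    (hXmeas : ∀ v i j, Measurable fun ω => X v ω i j)
    (hXherm : ∀ v ω, (X v ω).IsHermitian)
    (lam : Matrix (Fin m) (Fin m) ℂ) (hlam : (imPart lam).PosDef)
    (S : Ω → Matrix (Fin m × Fin n) (Fin m × Fin n) ℂ)
    (hS : ∀ ω, S ω = γ ⊗ₖ (1 : Matrix (Fin n) (Fin n) ℂ)
        + ∑ v, α v ⊗ₖ (((Real.sqrt n : ℂ))⁻¹ • X v ω)
        + ∑ u, β u ⊗ₖ A u)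
    (G : Matrix (Fin m) (Fin m) ℂ)
    (hG : G = Matrix.of fun i j =>
        ∫ ω, partialTrace ((lam ⊗ₖ (1 : Matrix (Fin n) (Fin n) ℂ) - S ω)⁻¹) i j ∂μ) :
    IsUnit ((lam - γ - ∑ v, α v * G * α v) ⊗ₖ (1 : Matrix (Fin n) (Fin n) ℂ)
        - ∑ u, β u ⊗ₖ A u) ∧
    opNorm (((lam - γ - ∑ v, α v * G * α v) ⊗ₖ (1 : Matrix (Fin n) (Fin n) ℂ)
        - ∑ u, β u ⊗ₖ A u)⁻¹) ≤ opNorm ((imPart lam)⁻¹) :=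
  stmt9_general μ γ hγ α hα β hβ A hA X hXmeas hXherm lam hlam S hS G hG
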